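/- arXiv:1502.03999 — 2 statements merged into one kernel-verified Lean document; each statement's English description precedes it below -/
import Mathlib

section
/- Let Γ be a group, h : Γ → ℤ a group homomorphism, α a nonzero complex number, n ≥ 2, and z̃ : Γ → ℂ^{n−1} any map (row vectors). Define ρ̃(γ) to be the n×n block matrix with (1,1)-entry α^{h(γ)}, first-row tail z̃(γ)·J_{n−1}^{−h(γ)}, lower-right (n−1)×(n−1) block J_{n−1}^{−h(γ)}, and zeros in the rest of the first column. Then ρ̃ : Γ → GL(n,ℂ) is a group homomorphism if and only if z̃(γ₁γ₂) = z̃(γ₁) + α^{h(γ₁)} z̃(γ₂) J_{n−1}^{h(γ₁)} for all γ₁, γ₂ ∈ Γ. -/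
open Matrix

noncomputable section

/-- Generalized binomial coefficient C(m,k) for m : ℤ, as a complex number. -/
def gbinom (m : ℤ) (k : ℕ) : ℂ :=
  (∏ i ∈ Finset.range k, ((m : ℂ) - i)) / (Nat.factorial k)

/-- The n×n nilpotent Jordan matrix N. -/
def Nmat (n : ℕ) : Matrix (Fin n) (Fin n) ℂ :=
  Matrix.of fun i j => if (i : ℕ) + 1 = (j : ℕ) then 1 else 0

/-- The unipotent Jordan block J = I + N. -/
def Jmat (n : ℕ) : Matrix (Fin n) (Fin n) ℂ := 1 + Nmat n

lemma Jmat_blockTriangular (n : ℕ) : (Jmat n).BlockTriangular id := by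
  intro i j hij
  have hji : (j : ℕ) < (i : ℕ) := hij
  simp only [Jmat, Matrix.add_apply, Matrix.one_apply, Nmat, Matrix.of_apply]
  rw [if_neg (by intro h; subst h; exact lt_irrefl _ hji), if_neg (by omega)]
  simp

lemma Jmat_isUnit (n : ℕ) : IsUnit (Jmat n) := by
  rw [Matrix.isUnit_iff_isUnit_det,
    Matrix.det_of_upperTriangular (Jmat_blockTriangular n)]
  have : ∀ i : Fin n, Jmat n i i = 1 := by
    intro i
    simp [Jmat, Matrix.one_apply, Nmat]
  simp [this]

/-- Integer powers (positive and negative) of the unipotent Jordan block. -/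
def Jz (n : ℕ) (m : ℤ) : Matrix (Fin n) (Fin n) ℂ :=
  (((Jmat_isUnit n).unit ^ m : (Matrix (Fin n) (Fin n) ℂ)ˣ) : Matrix (Fin n) (Fin n) ℂ)


/-- The candidate representation ρ̃ : block matrix with (1,1)-entry `α^{h(γ)}`,
first-row tail `z̃(γ)·J^{−h(γ)}`, lower-right block `J^{−h(γ)}` and zeros below. -/
def RhoTilde (Γ : Type*) (α : ℂ) (m : ℕ) (h : Γ → ℤ) (ztil : Γ → Fin m → ℂ) (γ : Γ) :
    Matrix (Fin 1 ⊕ Fin m) (Fin 1 ⊕ Fin m) ℂ :=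
  Matrix.fromBlocks (Matrix.of fun _ _ => α ^ h γ)
    (Matrix.of fun _ j => Matrix.vecMul (ztil γ) (Jz m (-(h γ))) j)
    0 (Jz m (-(h γ)))

/-!
The diagonal blocks of `ρ̃` multiply correctly because `h` is additive, so for block
upper-triangular matrices `ρ̃(γ₁γ₂) = ρ̃(γ₁)ρ̃(γ₂)` reduces to the off-diagonal block:
`z̃(γ₁γ₂) J^{-h(γ₁)-h(γ₂)} = α^{h(γ₁)} z̃(γ₂) J^{-h(γ₂)} + z̃(γ₁) J^{-h(γ₁)-h(γ₂)}`.
Multiplying on the right by the invertible `J^{h(γ₁)+h(γ₂)}` turns this into the cocycle identity.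
-/

theorem Matrix.fromBlocks_zero₂₁_eq_mul_iff {l m α : Type*} [Fintype l] [Fintype m]
    [NonUnitalNonAssocSemiring α] {A A₁ A₂ : Matrix l l α} {B B₁ B₂ : Matrix l m α}
    {D D₁ D₂ : Matrix m m α} :
    fromBlocks A B 0 D = fromBlocks A₁ B₁ 0 D₁ * fromBlocks A₂ B₂ 0 D₂ ↔
      A = A₁ * A₂ ∧ B = A₁ * B₂ + B₁ * D₂ ∧ D = D₁ * D₂ := by
  simp [fromBlocks_multiply, fromBlocks_inj]

theorem Matrix.vecMul_units_mul_eq_iff {m R : Type*} [Fintype m] [DecidableEq m] [CommRing R]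
    (U V : (Matrix m m R)ˣ) (c : R) (x y w : m → R) :
    x ᵥ* (↑(U * V) : Matrix m m R) =
        c • y ᵥ* (V : Matrix m m R) + w ᵥ* (U : Matrix m m R) ᵥ* (V : Matrix m m R) ↔
      x = w + c • y ᵥ* (↑U⁻¹ : Matrix m m R) := by
  have hrhs : c • y ᵥ* (V : Matrix m m R) + w ᵥ* (U : Matrix m m R) ᵥ* (V : Matrix m m R) =
      (w + c • y ᵥ* (↑U⁻¹ : Matrix m m R)) ᵥ* (↑(U * V) : Matrix m m R) := by
    simp only [Units.val_mul, add_vecMul, smul_vecMul, vecMul_vecMul, ← mul_assoc,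
      Units.inv_mul, one_mul]
    abel
  rw [hrhs]
  exact (vecMul_injective_of_isUnit (U * V).isUnit).eq_iff

lemma Jz_add (m : ℕ) (a b : ℤ) : Jz m (a + b) = Jz m a * Jz m b := by
  rw [Jz, Jz, Jz, _root_.zpow_add, Units.val_mul]

lemma RhoTilde_eq_fromBlocks (Γ : Type*) (α : ℂ) (m : ℕ) (h : Γ → ℤ) (ztil : Γ → Fin m → ℂ)
    (γ : Γ) :
    RhoTilde Γ α m h ztil γ = fromBlocks (α ^ h γ • 1)
      (replicateRow (Fin 1) (ztil γ ᵥ* Jz m (-h γ))) 0 (Jz m (-h γ)) := by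
  unfold RhoTilde
  congr 1
  ext i j
  simp [Subsingleton.elim i j]

theorem RhoTilde_mul_eq_iff {Γ : Type*} [Mul Γ] {h : Γ → ℤ} {α : ℂ} (hα : α ≠ 0) {m : ℕ}
    {ztil : Γ → Fin m → ℂ} {γ₁ γ₂ : Γ} (hh : h (γ₁ * γ₂) = h γ₁ + h γ₂) :
    RhoTilde Γ α m h ztil (γ₁ * γ₂) = RhoTilde Γ α m h ztil γ₁ * RhoTilde Γ α m h ztil γ₂ ↔
      ztil (γ₁ * γ₂) = ztil γ₁ + α ^ h γ₁ • ztil γ₂ ᵥ* Jz m (h γ₁) := by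
  have hA : α ^ (h γ₁ + h γ₂) • (1 : Matrix (Fin 1) (Fin 1) ℂ) =
      α ^ h γ₁ • 1 * α ^ h γ₂ • 1 := by
    rw [smul_mul_smul, one_mul, zpow_add₀ hα]
  have hD : Jz m (-(h γ₁ + h γ₂)) = Jz m (-h γ₁) * Jz m (-h γ₂) := by
    rw [neg_add, Jz_add]
  rw [RhoTilde_eq_fromBlocks, RhoTilde_eq_fromBlocks, RhoTilde_eq_fromBlocks, hh,
    fromBlocks_zero₂₁_eq_mul_iff, and_iff_left hD, and_iff_right hA, Matrix.smul_mul,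
    Matrix.one_mul, ← replicateRow_smul, ← replicateRow_vecMul, ← replicateRow_add,
    replicateRow_inj, hD]
  set J := (Jmat_isUnit m).unit
  have := vecMul_units_mul_eq_iff (J ^ (-h γ₁)) (J ^ (-h γ₂)) (α ^ h γ₁) (ztil (γ₁ * γ₂))
    (ztil γ₂) (ztil γ₁)
  rwa [Units.val_mul, ← _root_.zpow_neg, neg_neg] at this

theorem stmt4_general (Γ : Type*) [Group Γ] (h : Γ → ℤ)
    (hh : ∀ a b : Γ, h (a * b) = h a + h b)
    (α : ℂ) (hα : α ≠ 0) (n : ℕ) (ztil : Γ → Fin (n - 1) → ℂ) :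
    (∀ γ₁ γ₂ : Γ,
        RhoTilde Γ α (n - 1) h ztil (γ₁ * γ₂)
          = RhoTilde Γ α (n - 1) h ztil γ₁ * RhoTilde Γ α (n - 1) h ztil γ₂)
    ↔ (∀ γ₁ γ₂ : Γ,
        ztil (γ₁ * γ₂)
          = ztil γ₁ + α ^ h γ₁ • Matrix.vecMul (ztil γ₂) (Jz (n - 1) (h γ₁))) :=
  forall₂_congr fun _ _ => RhoTilde_mul_eq_iff hα (hh _ _)

/-- ρ̃ is a group homomorphism into GL(n,ℂ) if and only if
`z̃(γ₁γ₂) = z̃(γ₁) + α^{h(γ₁)} z̃(γ₂) J^{h(γ₁)}` for all γ₁, γ₂. -/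
theorem stmt4 (Γ : Type*) [Group Γ] (h : Γ → ℤ)
    (hh : ∀ a b : Γ, h (a * b) = h a + h b)
    (α : ℂ) (hα : α ≠ 0) (n : ℕ) (hn : 2 ≤ n) (ztil : Γ → Fin (n - 1) → ℂ) :
    (∀ γ₁ γ₂ : Γ,
        RhoTilde Γ α (n - 1) h ztil (γ₁ * γ₂)
          = RhoTilde Γ α (n - 1) h ztil γ₁ * RhoTilde Γ α (n - 1) h ztil γ₂)
    ↔ (∀ γ₁ γ₂ : Γ,
        ztil (γ₁ * γ₂)
          = ztil γ₁ + α ^ h γ₁ • Matrix.vecMul (ztil γ₂) (Jz (n - 1) (h γ₁))) :=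
  stmt4_general Γ h hh α hα n ztil

end
end

section
/- Let Γ, h, α, n, z_1, …, z_{n−1} and ϱ be as specified, and let 0 ≤ i ≤ n−3. Then C(i) and C(i+1) are invariant under the adjoint action γ·X = ϱ(γ) X ϱ(γ)^{−1}, and the ℂ-linear map C(0) → C(i+1)/C(i) sending E_k^n to the class of E_k^{n−(i+1)} (for 1 ≤ k ≤ n) is a Γ-equivariant isomorphism, where Γ acts on C(0) by the adjoint action and on C(i+1)/C(i) by the induced quotient action. -/
open Matrix LaurentPolynomial

noncomputable section

/-- The representation ϱ : Γ → GL(n,ℂ), with `ϱ(γ)_{1,1} = α^{h(γ)}`,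
`ϱ(γ)_{1,j} = z_{j−1}(γ)` for `2 ≤ j ≤ n`, `ϱ(γ)_{i,1} = 0` for `2 ≤ i ≤ n`, and
`ϱ(γ)_{i,j} = (J_{n−1}^{h(γ)})_{i−1,j−1}` for `2 ≤ i, j ≤ n` (1-based indices). -/
def rhoMat (Γ : Type*) (α : ℂ) (n : ℕ) (h : Γ → ℤ) (z : Γ → ℕ → ℂ) (γ : Γ) :
    Matrix (Fin n) (Fin n) ℂ :=
  Matrix.of fun i j =>
    if hi : (i : ℕ) = 0 then
      (if (j : ℕ) = 0 then α ^ h γ else z γ (j : ℕ))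
    else
      (if hj : (j : ℕ) = 0 then 0
       else Jz (n - 1) (h γ) ⟨(i : ℕ) - 1, by have := i.isLt; omega⟩
              ⟨(j : ℕ) - 1, by have := j.isLt; omega⟩)

/-- The subspace `C(i)` of `gl(n,ℂ)` of matrices whose columns of 0-based index
`< n−1−i` vanish. -/
def Csub (n i : ℕ) : Submodule ℂ (Matrix (Fin n) (Fin n) ℂ) where
  carrier := {X | ∀ a b : Fin n, (b : ℕ) < n - 1 - i → X a b = 0}
  add_mem' := by
    intro X Y hX hY a b hb
    simp [Matrix.add_apply, hX a b hb, hY a b hb]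
  zero_mem' := by intro a b hb; rfl
  smul_mem' := by
    intro c X hX a b hb
    simp [Matrix.smul_apply, hX a b hb]

lemma stdBasisMatrix_mem_Csub (n k : ℕ) (i j : Fin n) (hj : n - 1 - k ≤ (j : ℕ)) :
    Matrix.single i j (1 : ℂ) ∈ Csub n k := by
  intro a b hb
  have hjb : j ≠ b := by
    intro hjb
    subst hjb
    omega
  simp [Matrix.single, Matrix.of_apply]
  intro _ hcontra
  exact absurd hcontra hjb

/-! `ϱ(γ)` is upper triangular with diagonal `(α ^ h γ, 1, …, 1)`, and so is `ϱ(γ)⁻¹` up to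
inverting the corner entry. Left multiplication by anything and right multiplication by an upper
triangular matrix keep columns `0, …, c - 1` zero, so every `C(i)` is invariant. Modulo `C(i)`, a
matrix of `C(i+1)` is just its column `n - 2 - i`, as a matrix of `C(0)` is its last column; both
spaces are thereby identified with `ℂⁿ`. On that leading column the adjoint action is
`v ↦ ϱ(γ) v` times a diagonal entry of `ϱ(γ)⁻¹`, which is `1` in both positions, so the
identification is equivariant. -/

namespace Matrix

section Triangular

variable {R m : Type*} [Fintype m] [LinearOrder m]

theorem IsUpperTriangular.mul_apply_self [NonUnitalNonAssocSemiring R] {M N : Matrix m m R}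
    (hM : M.IsUpperTriangular) (hN : N.IsUpperTriangular) (k : m) :
    (M * N) k k = M k k * N k k := by
  rw [mul_apply]
  refine Finset.sum_eq_single k (fun j _ hjk => ?_) (by simp)
  rcases hjk.lt_or_gt with hj | hj
  · rw [hM hj, zero_mul]
  · rw [hN hj, mul_zero]

theorem IsUpperTriangular.inv [CommRing R] {M : Matrix m m R} (hM : M.IsUpperTriangular)
    (hdet : IsUnit M.det) : M⁻¹.IsUpperTriangular :=
  have := M.invertibleOfIsUnitDet hdet
  blockTriangular_inv_of_blockTriangular hM

theorem IsUpperTriangular.inv_apply_self {K : Type*} [Field K]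
    {M : Matrix m m K} (hM : M.IsUpperTriangular) (hdet : IsUnit M.det) (k : m) :
    M⁻¹ k k = (M k k)⁻¹ := by
  have h := hM.mul_apply_self (hM.inv hdet) k
  rw [mul_nonsing_inv M hdet, one_apply_eq] at h
  exact (inv_eq_of_mul_eq_one_right h.symm).symm

variable (R m) in
def upperUnitriangular [CommRing R] : Subgroup (Matrix m m R)ˣ where
  carrier := {u | (u : Matrix m m R).IsUpperTriangular ∧ ∀ k, (u : Matrix m m R) k k = 1}
  one_mem' := ⟨blockTriangular_one, fun k => one_apply_eq k⟩
  mul_mem' := fun ⟨hu, hu'⟩ ⟨hv, hv'⟩ =>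
    ⟨hu.mul hv, fun k => by rw [Units.val_mul, hu.mul_apply_self hv, hu' k, hv' k, one_mul]⟩
  inv_mem' := by
    rintro u ⟨hu, hu'⟩
    have hinv : (↑u⁻¹ : Matrix m m R).IsUpperTriangular := by
      rw [coe_units_inv]
      exact hu.inv (isUnit_det_of_invertible _)
    refine ⟨hinv, fun k => ?_⟩
    have h := hu.mul_apply_self hinv k
    rwa [Units.mul_inv, one_apply_eq, hu' k, one_mul, eq_comm] at h

theorem mem_upperUnitriangular [CommRing R] {u : (Matrix m m R)ˣ} :
    u ∈ upperUnitriangular R m ↔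
      (u : Matrix m m R).IsUpperTriangular ∧ ∀ k, (u : Matrix m m R) k k = 1 :=
  Iff.rfl

theorem IsUpperTriangular.mul_apply_of_forall_lt [NonUnitalNonAssocSemiring R]
    {X Q : Matrix m m R} (hQ : Q.IsUpperTriangular) {c : m}
    (hX : ∀ a b, b < c → X a b = 0) (a : m) : (X * Q) a c = X a c * Q c c := by
  rw [mul_apply]
  refine Finset.sum_eq_single c (fun l _ hlc => ?_) (by simp)
  rcases hlc.lt_or_gt with hl | hl
  · rw [hX a l hl, zero_mul]
  · rw [hQ hl, mul_zero]

theorem mul_mul_apply_eq_of_forall_apply_eq [NonUnitalNonAssocSemiring R]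
    {P X Y Q : Matrix m m R} (hQ : Q.IsUpperTriangular) {c d : m}
    (hX : ∀ a b, b < c → X a b = 0) (hY : ∀ a b, b < d → Y a b = 0)
    (hXY : ∀ a, X a c = Y a d) (hQcd : Q c c = Q d d) (a : m) :
    (P * X * Q) a c = (P * Y * Q) a d := by
  have hPX : ∀ a b, b < c → (P * X) a b = 0 := fun a b hb => by simp [mul_apply, hX _ b hb]
  have hPY : ∀ a b, b < d → (P * Y) a b = 0 := fun a b hb => by simp [mul_apply, hY _ b hb]
  rw [hQ.mul_apply_of_forall_lt hPX, hQ.mul_apply_of_forall_lt hPY, hQcd, mul_apply, mul_apply]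
  simp only [hXY]

end Triangular

variable {m n R : Type*} [Semiring R]

def colLinearMap (j : n) : Matrix m n R →ₗ[R] m → R where
  toFun X a := X a j
  map_add' _ _ := rfl
  map_smul' _ _ := rfl

@[simp]
theorem colLinearMap_apply (j : n) (X : Matrix m n R) (a : m) : colLinearMap j X a = X a j :=
  rfl

end Matrix

theorem Jz_mem_upperUnitriangular (n : ℕ) (m : ℤ) :
    (Jmat_isUnit n).unit ^ m ∈ upperUnitriangular ℂ (Fin n) := by
  refine zpow_mem (mem_upperUnitriangular.2 ⟨Jmat_blockTriangular n, fun k => ?_⟩) m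
  simp [Jmat, Nmat]

section Rho

variable {Γ : Type*} (α : ℂ) (n : ℕ) (h : Γ → ℤ) (z : Γ → ℕ → ℂ) (γ : Γ)

theorem rhoMat_isUpperTriangular : (rhoMat Γ α n h z γ).IsUpperTriangular := by
  intro a b (hba : (b : ℕ) < a)
  simp only [rhoMat, of_apply, dif_neg (show (a : ℕ) ≠ 0 by omega)]
  split_ifs
  · rfl
  · exact (Jz_mem_upperUnitriangular (n - 1) (h γ)).1 (Fin.mk_lt_mk.2 (by omega))

theorem rhoMat_apply_self_of_ne_zero (k : Fin n) (hk : (k : ℕ) ≠ 0) :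
    rhoMat Γ α n h z γ k k = 1 := by
  simp only [rhoMat, of_apply, dif_neg hk]
  exact (Jz_mem_upperUnitriangular (n - 1) (h γ)).2 _

theorem isUnit_det_rhoMat (hα : α ≠ 0) : IsUnit (rhoMat Γ α n h z γ).det := by
  rw [det_of_isUpperTriangular (rhoMat_isUpperTriangular α n h z γ), isUnit_iff_ne_zero,
    Finset.prod_ne_zero_iff]
  intro k _
  by_cases hk : (k : ℕ) = 0
  · simpa [rhoMat, hk] using zpow_ne_zero (h γ) hα
  · simp [rhoMat_apply_self_of_ne_zero α n h z γ k hk]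

theorem rhoMat_inv_apply_self_of_ne_zero (hα : α ≠ 0) (k : Fin n) (hk : (k : ℕ) ≠ 0) :
    (rhoMat Γ α n h z γ)⁻¹ k k = 1 := by
  rw [(rhoMat_isUpperTriangular α n h z γ).inv_apply_self (isUnit_det_rhoMat α n h z γ hα),
    rhoMat_apply_self_of_ne_zero α n h z γ k hk, inv_one]

end Rho

namespace Csub

variable {n : ℕ}

theorem mul_mem (P : Matrix (Fin n) (Fin n) ℂ) {k : ℕ} {X : Matrix (Fin n) (Fin n) ℂ}
    (hX : X ∈ Csub n k) : P * X ∈ Csub n k := fun a b hb => by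
  simp [mul_apply, hX _ b hb]

theorem mul_mem_of_isUpperTriangular {k : ℕ} {X Q : Matrix (Fin n) (Fin n) ℂ}
    (hX : X ∈ Csub n k) (hQ : Q.IsUpperTriangular) : X * Q ∈ Csub n k := by
  intro a b hb
  rw [mul_apply]
  refine Finset.sum_eq_zero fun l _ => ?_
  by_cases hlb : (l : ℕ) ≤ b
  · rw [hX a l (by omega), zero_mul]
  · rw [hQ (show b < l by omega), mul_zero]

theorem updateCol_zero_mem {k : ℕ} (j : Fin n) (hj : n - 1 - k ≤ j) (v : Fin n → ℂ) :
    updateCol 0 j v ∈ Csub n k := by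
  intro a b hb
  rw [updateCol_ne (by omega), Matrix.zero_apply]

def col (k : ℕ) (j : Fin n) : Csub n k →ₗ[ℂ] Fin n → ℂ :=
  colLinearMap j ∘ₗ (Csub n k).subtype

theorem col_surjective {k : ℕ} {j : Fin n} (hj : n - 1 - k ≤ j) :
    Function.Surjective (col k j) := fun v =>
  ⟨⟨_, updateCol_zero_mem j hj v⟩, funext fun a => by simp [col]⟩

theorem ker_col_succ (i : ℕ) (j : Fin n) (hj : (j : ℕ) + 1 = n - 1 - i) :
    LinearMap.ker (col (i + 1) j) = (Csub n i).comap (Csub n (i + 1)).subtype := by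
  ext ⟨Y, hY⟩
  simp only [LinearMap.mem_ker, Submodule.mem_comap, Submodule.coe_subtype]
  constructor
  · intro hcol a b hb
    rcases Nat.lt_succ_iff_lt_or_eq.1 (hj ▸ hb : (b : ℕ) < j + 1) with hbj | hbj
    · exact hY a b (by omega)
    · obtain rfl : b = j := Fin.ext hbj
      exact congr_fun hcol a
  · intro hYi
    funext a
    exact hYi a j (by omega)

def lastColEquiv (hn : 0 < n) : Csub n 0 ≃ₗ[ℂ] (Fin n → ℂ) :=
  LinearEquiv.ofBijective (col 0 ⟨n - 1, by omega⟩) <| by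
    refine ⟨(injective_iff_map_eq_zero _).2 fun ⟨X, hX⟩ hcol => Subtype.ext ?_,
      col_surjective le_rfl⟩
    ext a b
    by_cases hb : (b : ℕ) < n - 1
    · exact hX a b hb
    · rw [show b = ⟨n - 1, by omega⟩ from Fin.eq_mk_iff_val_eq.2 (by omega)]
      exact congr_fun hcol a

def quotColEquiv (i : ℕ) (hi : i + 2 ≤ n) :
    (Csub n (i + 1) ⧸ (Csub n i).comap (Csub n (i + 1)).subtype) ≃ₗ[ℂ] (Fin n → ℂ) :=
  (Submodule.quotEquivOfEq _ _
      (ker_col_succ i ⟨n - 2 - i, by omega⟩ (by simp only; omega)).symm).trans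
    ((col (i + 1) _).quotKerEquivOfSurjective (col_surjective (by simp only; omega)))

def quotEquiv (i : ℕ) (hi : i + 2 ≤ n) :
    Csub n 0 ≃ₗ[ℂ] (Csub n (i + 1) ⧸ (Csub n i).comap (Csub n (i + 1)).subtype) :=
  (lastColEquiv (by omega)).trans (quotColEquiv i hi).symm

theorem quotEquiv_eq_mk_iff (i : ℕ) (hi : i + 2 ≤ n) (X : Csub n 0) (Y : Csub n (i + 1)) :
    quotEquiv i hi X = Submodule.Quotient.mk Y ↔
      ∀ a, (X : Matrix (Fin n) (Fin n) ℂ) a ⟨n - 1, by omega⟩ =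
        (Y : Matrix (Fin n) (Fin n) ℂ) a ⟨n - 2 - i, by omega⟩ := by
  rw [quotEquiv, LinearEquiv.trans_apply, LinearEquiv.symm_apply_eq, quotColEquiv,
    LinearEquiv.trans_apply, Submodule.quotEquivOfEq_mk,
    LinearMap.quotKerEquivOfSurjective_apply_mk, funext_iff]
  rfl

end Csub

theorem rhoMat_mul_mul_inv_mem_Csub {Γ : Type*} {α : ℂ} (hα : α ≠ 0) {n : ℕ} (h : Γ → ℤ)
    (z : Γ → ℕ → ℂ) (γ : Γ) {k : ℕ} {X : Matrix (Fin n) (Fin n) ℂ} (hX : X ∈ Csub n k) :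
    rhoMat Γ α n h z γ * X * (rhoMat Γ α n h z γ)⁻¹ ∈ Csub n k :=
  Csub.mul_mem_of_isUpperTriangular (Csub.mul_mem _ hX)
    ((rhoMat_isUpperTriangular α n h z γ).inv (isUnit_det_rhoMat α n h z γ hα))

/-- For `0 ≤ i ≤ n−3`, the subspaces `C(i)` and `C(i+1)` are invariant under the
adjoint action `γ·X = ϱ(γ) X ϱ(γ)⁻¹`, and the ℂ-linear map `C(0) → C(i+1)/C(i)`
sending `E_kⁿ` to the class of `E_k^{n−(i+1)}` (for `1 ≤ k ≤ n`) is a Γ-equivariant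
isomorphism. -/
theorem stmt11 (Γ : Type*) (h : Γ → ℤ)
    (α : ℂ) (hα : α ≠ 0) (n : ℕ) (z : Γ → ℕ → ℂ)
    (i : ℕ) (hi : i + 3 ≤ n) :
    (∀ γ : Γ, ∀ X ∈ Csub n i,
        rhoMat Γ α n h z γ * X * (rhoMat Γ α n h z γ)⁻¹ ∈ Csub n i)
    ∧ (∀ γ : Γ, ∀ X ∈ Csub n (i + 1),
        rhoMat Γ α n h z γ * X * (rhoMat Γ α n h z γ)⁻¹ ∈ Csub n (i + 1))
    ∧ ∃ e : (Csub n 0) ≃ₗ[ℂ]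
        (Csub n (i + 1) ⧸ (Csub n i).comap (Csub n (i + 1)).subtype),
      (∀ k : Fin n,
        e ⟨Matrix.single k (⟨n - 1, by omega⟩ : Fin n) (1 : ℂ),
            stdBasisMatrix_mem_Csub n 0 _ _ (le_refl _)⟩
          = Submodule.Quotient.mk
              ⟨Matrix.single k (⟨n - 2 - i, by omega⟩ : Fin n) (1 : ℂ),
                stdBasisMatrix_mem_Csub n (i + 1) _ _ ((by omega : n - 1 - (i + 1) ≤ n - 2 - i))⟩)
      ∧ (∀ (γ : Γ) (X : Csub n 0)
            (hX : rhoMat Γ α n h z γ * (X : Matrix (Fin n) (Fin n) ℂ)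
                * (rhoMat Γ α n h z γ)⁻¹ ∈ Csub n 0)
            (Y : Csub n (i + 1)),
          e X = Submodule.Quotient.mk Y →
          ∀ hY : rhoMat Γ α n h z γ * (Y : Matrix (Fin n) (Fin n) ℂ)
              * (rhoMat Γ α n h z γ)⁻¹ ∈ Csub n (i + 1),
            e ⟨_, hX⟩ = Submodule.Quotient.mk ⟨_, hY⟩) := by
  refine ⟨fun γ _ => rhoMat_mul_mul_inv_mem_Csub hα h z γ,
    fun γ _ => rhoMat_mul_mul_inv_mem_Csub hα h z γ, Csub.quotEquiv i (by omega),
    fun k => (Csub.quotEquiv_eq_mk_iff ..).2 fun a => by simp [single_apply], ?_⟩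
  intro γ X _ Y hXY _
  rw [Csub.quotEquiv_eq_mk_iff] at hXY ⊢
  have hρinv := (rhoMat_isUpperTriangular α n h z γ).inv (isUnit_det_rhoMat α n h z γ hα)
  refine mul_mul_apply_eq_of_forall_apply_eq hρinv (fun a b hb => X.2 a b hb)
    (fun a b (hb : (b : ℕ) < n - 2 - i) => Y.2 a b (by omega)) hXY ?_
  rw [rhoMat_inv_apply_self_of_ne_zero α n h z γ hα _ (by simp only; omega),
    rhoMat_inv_apply_self_of_ne_zero α n h z γ hα _ (by simp only; omega)]
end
end
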